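/- Fix reals λ, r, b, ν > 0, d ≥ 0 with b > d, δ > 0, and β̂ > 0, and let q(θ,ψ) := min{β̂ψ(1−ψ), 1} (free-riding response). Set ρ := λ/(r+b) and μ := b/ν, and assume ρ > 1, μρ < β̂ < ρ²μ, and μρ(1 − μρ/β̂) < 1. Let θ̂ := μρ/β̂ − 1/ρ, ψ̂ := 1 − μρ/β̂, and η̂ := (b−d)/ϱ(θ̂,ψ̂). If η̂ > δ, then the point P := (θ̂, ψ̂, η̂) is a Lyapunov-stable equilibrium of g. -/

import Mathlib

/-!
Near the interior equilibrium the response `min (β̂ψ(1-ψ)) 1` is its smooth branch, and the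
equilibrium relations `λφ̂ = r + b`, `νβ̂(1-ψ̂)φ̂ = b` turn the `(θ, ψ)`-part of the derivative of
`αu² + v²` along `g` (with `u = θ - θ̂`, `v = ψ - ψ̂`, `w = u + v`) into `-2/(ηϱ)` times
`αλθ·uw + νβ̂ψ(1-ψ)·vw + νβ̂φ̂ψ·v²`. Choosing `α` with `αλθ̂ = νβ̂ψ̂(1-ψ̂) =: A`, this form is
`A w² + C v²` (`C = νβ̂φ̂ψ̂`) at the equilibrium, positive definite, and stays so nearby.
The `η`-equation `η' = (b-d)/ϱ - η` is a stable relaxation forced by a Lipschitz function of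
`(θ, ψ)`, so adding a small multiple of `(η - η̂)²` gives a strict Lyapunov function.
-/

/-- `ϱ(θ,ψ) = b + d + λθφ + νφ + rθ` with `φ = 1 − θ − ψ` (case `d_e = 0`). -/
noncomputable def varrho (lam r b ν d θ ψ : ℝ) : ℝ :=
  b + d + lam * θ * (1 - θ - ψ) + ν * (1 - θ - ψ) + r * θ

/-- The vector field `g = (g^θ, g^ψ, g^η)` of the limit ODE for the epidemic model with
vaccination-response function `q`, on coordinates `(θ, ψ, η)`. -/
noncomputable def epiVF (lam r b ν d : ℝ) (q : ℝ → ℝ → ℝ) (x : ℝ × ℝ × ℝ) : ℝ × ℝ × ℝ :=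
  (x.1 / (x.2.2 * varrho lam r b ν d x.1 x.2.1) * ((1 - x.1 - x.2.1) * lam - r - b),
   1 / (x.2.2 * varrho lam r b ν d x.1 x.2.1) *
     (q x.1 x.2.1 * (1 - x.1 - x.2.1) * ν - b * x.2.1),
   (b - d) / varrho lam r b ν d x.1 x.2.1 - x.2.2)

/-- The domain `D = {(θ,ψ,η) : θ ≥ 0, ψ ≥ 0, θ+ψ ≤ 1, η > δ}`. -/
def domD (δ : ℝ) : Set (ℝ × ℝ × ℝ) :=
  {x | 0 ≤ x.1 ∧ 0 ≤ x.2.1 ∧ x.1 + x.2.1 ≤ 1 ∧ δ < x.2.2}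

/-- `P ∈ D` is a Lyapunov-stable equilibrium of `g`: `g(P) = 0` and there are `r₀ > 0` and a
continuously differentiable `V` with `V(P) = 0`, `V(x) > 0` and `⟨∇V(x), g(x)⟩ < 0` for all
`x ∈ D ∩ B(P,r₀)`, `x ≠ P`. -/
def IsLyapunovStableEquilibrium (g : ℝ × ℝ × ℝ → ℝ × ℝ × ℝ) (D : Set (ℝ × ℝ × ℝ))
    (P : ℝ × ℝ × ℝ) : Prop :=
  P ∈ D ∧ g P = 0 ∧
    ∃ r₀ > (0 : ℝ), ∃ V : ℝ × ℝ × ℝ → ℝ, ContDiff ℝ 1 V ∧ V P = 0 ∧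
      ∀ x ∈ D ∩ Metric.ball P r₀, x ≠ P → 0 < V x ∧ fderiv ℝ V x (g x) < 0

open Filter Topology

def weightedSqDist (a c : ℝ) (P x : ℝ × ℝ × ℝ) : ℝ :=
  a * (x.1 - P.1) ^ 2 + (x.2.1 - P.2.1) ^ 2 + c * (x.2.2 - P.2.2) ^ 2

section WeightedSqDist

variable {a c : ℝ} {P : ℝ × ℝ × ℝ}

theorem contDiff_weightedSqDist : ContDiff ℝ 1 (weightedSqDist a c P) := by
  unfold weightedSqDist; fun_prop

theorem weightedSqDist_self : weightedSqDist a c P P = 0 := by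
  simp [weightedSqDist]

theorem weightedSqDist_pos (ha : 0 < a) (hc : 0 < c) {x : ℝ × ℝ × ℝ} (hx : x ≠ P) :
    0 < weightedSqDist a c P x := by
  obtain ⟨θ, ψ, η⟩ := x
  obtain ⟨θ', ψ', η'⟩ := P
  have : θ - θ' ≠ 0 ∨ ψ - ψ' ≠ 0 ∨ η - η' ≠ 0 := by
    contrapose! hx; simp only [sub_eq_zero] at hx; rw [hx.1, hx.2.1, hx.2.2]
  unfold weightedSqDist
  rcases this with h | h | h <;> positivity

open ContinuousLinearMap in
theorem fderiv_weightedSqDist (x y : ℝ × ℝ × ℝ) :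
    fderiv ℝ (weightedSqDist a c P) x y =
      2 * a * (x.1 - P.1) * y.1 + 2 * (x.2.1 - P.2.1) * y.2.1
        + 2 * c * (x.2.2 - P.2.2) * y.2.2 := by
  have h₁ : HasFDerivAt (fun x : ℝ × ℝ × ℝ => x.1) (fst ℝ ℝ (ℝ × ℝ)) x := hasFDerivAt_fst
  have h₂ : HasFDerivAt (fun x : ℝ × ℝ × ℝ => x.2.1) ((fst ℝ ℝ ℝ).comp (snd ℝ ℝ (ℝ × ℝ))) x :=
    hasFDerivAt_fst.comp x hasFDerivAt_snd
  have h₃ : HasFDerivAt (fun x : ℝ × ℝ × ℝ => x.2.2) ((snd ℝ ℝ ℝ).comp (snd ℝ ℝ (ℝ × ℝ))) x :=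
    hasFDerivAt_snd.comp x hasFDerivAt_snd
  have h : HasFDerivAt (weightedSqDist a c P) _ x :=
    ((((h₁.sub_const P.1).pow 2).const_mul a).add ((h₂.sub_const P.2.1).pow 2)).add
      (((h₃.sub_const P.2.2).pow 2).const_mul c)
  rw [h.fderiv]
  simp only [Nat.add_one_sub_one, pow_one, nsmul_eq_mul, Nat.cast_ofNat, add_apply, smul_apply,
    coe_fst', smul_eq_mul, comp_apply, coe_snd']
  ring

end WeightedSqDist

section Criteria

variable {g : ℝ × ℝ × ℝ → ℝ × ℝ × ℝ} {D : Set (ℝ × ℝ × ℝ)} {P : ℝ × ℝ × ℝ}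

theorem isLyapunovStableEquilibrium_of_eventually {a c : ℝ} (hP : P ∈ D) (hg : g P = 0)
    (ha : 0 < a) (hc : 0 < c)
    (hdecr : ∀ᶠ x in 𝓝 P, x ∈ D → x ≠ P →
      2 * a * (x.1 - P.1) * (g x).1 + 2 * (x.2.1 - P.2.1) * (g x).2.1
        + 2 * c * (x.2.2 - P.2.2) * (g x).2.2 < 0) :
    IsLyapunovStableEquilibrium g D P := by
  obtain ⟨r₀, hr₀, hball⟩ := Metric.eventually_nhds_iff_ball.mp hdecr
  refine ⟨hP, hg, r₀, hr₀, weightedSqDist a c P, contDiff_weightedSqDist, weightedSqDist_self,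
    fun x ⟨hxD, hxP⟩ hne => ⟨weightedSqDist_pos ha hc hne, ?_⟩⟩
  rw [fderiv_weightedSqDist]
  exact hball x hxP hxD hne

theorem add_two_mul_mul_sub_neg {m L K s z G Q : ℝ} (hK : 0 < K) (hKL : K * L < m)
    (hs : 0 ≤ s) (hsz : s ≠ 0 ∨ z ≠ 0) (hQ : Q ≤ -m * s) (hG : G ^ 2 ≤ L * s) :
    Q + 2 * K * z * (G - z) < 0 := by
  have hzG : 2 * z * G ≤ z ^ 2 + G ^ 2 := two_mul_le_add_sq z G
  rcases hsz with hs0 | hz0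
  · have : 0 < (m - K * L) * s := mul_pos (by linarith) (lt_of_le_of_ne hs (Ne.symm hs0))
    nlinarith
  · have : 0 < K * z ^ 2 := by positivity
    nlinarith

theorem isLyapunovStableEquilibrium_of_triangular {a m L : ℝ} (hP : P ∈ D) (hg : g P = 0)
    (ha : 0 < a) (hm : 0 < m) (hL : 0 ≤ L)
    (hplanar : ∀ᶠ x in 𝓝 P, x ∈ D →
      2 * a * (x.1 - P.1) * (g x).1 + 2 * (x.2.1 - P.2.1) * (g x).2.1
        ≤ -m * ((x.1 - P.1) ^ 2 + (x.2.1 - P.2.1) ^ 2))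
    (hfibre : ∀ᶠ x in 𝓝 P, x ∈ D →
      ((g x).2.2 + (x.2.2 - P.2.2)) ^ 2 ≤ L * ((x.1 - P.1) ^ 2 + (x.2.1 - P.2.1) ^ 2)) :
    IsLyapunovStableEquilibrium g D P := by
  have hKL : m / (L + 1) * L < m := by
    rw [div_mul_eq_mul_div, div_lt_iff₀ (by positivity)]; nlinarith
  -- with `K = m / (L + 1)`, `2Kz(G - z) ≤ K G² - K z²` is absorbed by the planar dissipation
  refine isLyapunovStableEquilibrium_of_eventually hP hg ha (c := m / (L + 1)) (by positivity) ?_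
  filter_upwards [hplanar, hfibre] with x hpl hfi hxD hne
  have hsz : (x.1 - P.1) ^ 2 + (x.2.1 - P.2.1) ^ 2 ≠ 0 ∨ x.2.2 - P.2.2 ≠ 0 := by
    by_contra! h
    obtain ⟨hu, hv⟩ := (add_eq_zero_iff_of_nonneg (sq_nonneg _) (sq_nonneg _)).mp h.1
    rw [sq_eq_zero_iff, sub_eq_zero] at hu hv
    exact hne (Prod.ext hu (Prod.ext hv (sub_eq_zero.mp h.2)))
  have := add_two_mul_mul_sub_neg (by positivity) hKL (by positivity) hsz (hpl hxD) (hfi hxD)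
  rwa [add_sub_cancel_right] at this

end Criteria

theorem le_three_mul_perturbed_form {A C ε a₁ a₂ c₃ u v : ℝ} (hA : 3 * ε ≤ A) (hC : 3 * ε ≤ C)
    (h₁ : |a₁ - A| ≤ ε) (h₂ : |a₂ - A| ≤ ε) (h₃ : |c₃ - C| ≤ ε) :
    ε * (u ^ 2 + v ^ 2) ≤ 3 * (a₁ * u * (u + v) + a₂ * v * (u + v) + c₃ * v ^ 2) := by
  have hε : 0 ≤ ε := (abs_nonneg _).trans h₁
  rw [abs_le] at h₁ h₂ h₃
  -- at `a₁ = a₂ = A`, `c₃ = C` the form is `A (u + v)² + C v²`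
  have hform : (A - 2 * ε) * (u + v) ^ 2 + (C - 2 * ε) * v ^ 2
      ≤ a₁ * u * (u + v) + a₂ * v * (u + v) + c₃ * v ^ 2 := by
    nlinarith [sq_nonneg (u + 2 * v), sq_nonneg u,
      mul_nonneg (sub_nonneg.2 h₁.2) (sq_nonneg (u + v))]
  nlinarith [sq_nonneg (u + v), sq_nonneg (u + 2 * v), mul_nonneg hε (sq_nonneg (u + 2 * v)),
    mul_nonneg hε (sq_nonneg (u + v)), mul_nonneg (by linarith : 0 ≤ A - 3 * ε) (sq_nonneg (u + v)),
    mul_nonneg (by linarith : 0 ≤ C - 3 * ε) (sq_nonneg v)]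

section Varrho

variable {lam r b ν d : ℝ}

theorem le_varrho (hlam : 0 ≤ lam) (hν : 0 ≤ ν) (hr : 0 ≤ r) (hd : 0 ≤ d) {θ ψ : ℝ}
    (hθ : 0 ≤ θ) (hφ : 0 ≤ 1 - θ - ψ) : b ≤ varrho lam r b ν d θ ψ := by
  unfold varrho
  have := mul_nonneg (mul_nonneg hlam hθ) hφ
  nlinarith [mul_nonneg hν hφ, mul_nonneg hr hθ]

theorem varrho_sub_varrho (θ ψ θ' ψ' : ℝ) :
    varrho lam r b ν d θ ψ - varrho lam r b ν d θ' ψ' =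
      -(lam * θ + ν) * (θ - θ' + (ψ - ψ')) + (lam * (1 - θ' - ψ') + r) * (θ - θ') := by
  unfold varrho; ring

theorem abs_varrho_sub_varrho_le (hlam : 0 ≤ lam) (hν : 0 ≤ ν) (hr : 0 ≤ r) {θ ψ θ' ψ' : ℝ}
    (hθ₀ : 0 ≤ θ) (hθ₁ : θ ≤ 1) (hφ'₀ : 0 ≤ 1 - θ' - ψ') (hφ'₁ : 1 - θ' - ψ' ≤ 1) :
    |varrho lam r b ν d θ ψ - varrho lam r b ν d θ' ψ'| ≤
      (2 * lam + ν + r) * (|θ - θ'| + |ψ - ψ'|) := by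
  have hu := abs_nonneg (θ - θ')
  have hw : |θ - θ' + (ψ - ψ')| ≤ |θ - θ'| + |ψ - ψ'| := abs_add_le _ _
  rw [varrho_sub_varrho]
  calc _ ≤ |-(lam * θ + ν) * (θ - θ' + (ψ - ψ'))| + |(lam * (1 - θ' - ψ') + r) * (θ - θ')| :=
        abs_add_le _ _
    _ = (lam * θ + ν) * |θ - θ' + (ψ - ψ')| + (lam * (1 - θ' - ψ') + r) * |θ - θ'| := by
        rw [abs_mul, abs_mul, abs_neg, abs_of_nonneg (by positivity : 0 ≤ lam * θ + ν),
          abs_of_nonneg (by positivity : 0 ≤ lam * (1 - θ' - ψ') + r)]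
    _ ≤ (lam + ν) * (|θ - θ'| + |ψ - ψ'|) + (lam + r) * |θ - θ'| := by
        gcongr
        · nlinarith
        · nlinarith
    _ ≤ _ := by nlinarith [abs_nonneg (ψ - ψ')]

theorem sq_div_varrho_sub_div_varrho_le (hlam : 0 ≤ lam) (hν : 0 ≤ ν) (hr : 0 ≤ r)
    (hd : 0 ≤ d) (hb : 0 < b) (k : ℝ) {θ ψ θ' ψ' : ℝ} (hθ₀ : 0 ≤ θ) (hφ₀ : 0 ≤ 1 - θ - ψ)
    (hθ₁ : θ ≤ 1) (hθ'₀ : 0 ≤ θ') (hφ'₀ : 0 ≤ 1 - θ' - ψ') (hφ'₁ : 1 - θ' - ψ' ≤ 1) :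
    (k / varrho lam r b ν d θ ψ - k / varrho lam r b ν d θ' ψ') ^ 2 ≤
      2 * (k * (2 * lam + ν + r) / b ^ 2) ^ 2 * ((θ - θ') ^ 2 + (ψ - ψ') ^ 2) := by
  set ϱ := varrho lam r b ν d θ ψ
  set ϱ' := varrho lam r b ν d θ' ψ'
  have hϱ : b ≤ ϱ := le_varrho hlam hν hr hd hθ₀ hφ₀
  have hϱ' : b ≤ ϱ' := le_varrho hlam hν hr hd hθ'₀ hφ'₀
  have hϱ₀ : 0 < ϱ := hb.trans_le hϱ
  have hϱ'₀ : 0 < ϱ' := hb.trans_le hϱ'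
  have hlip : |ϱ - ϱ'| ≤ (2 * lam + ν + r) * (|θ - θ'| + |ψ - ψ'|) :=
    abs_varrho_sub_varrho_le hlam hν hr hθ₀ hθ₁ hφ'₀ hφ'₁
  set M := 2 * lam + ν + r
  set s := |θ - θ'| + |ψ - ψ'|
  have habs : |k / ϱ - k / ϱ'| ≤ |k| * M * s / b ^ 2 := by
    rw [show k / ϱ - k / ϱ' = -(k * (ϱ - ϱ')) / (ϱ * ϱ') by field_simp; ring, abs_div, abs_neg,
      abs_mul, abs_of_pos (mul_pos hϱ₀ hϱ'₀), mul_assoc, sq]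
    gcongr
  calc (k / ϱ - k / ϱ') ^ 2 = |k / ϱ - k / ϱ'| ^ 2 := (sq_abs _).symm
    _ ≤ (|k| * M * s / b ^ 2) ^ 2 := by gcongr
    _ = (k * M / b ^ 2) ^ 2 * s ^ 2 := by rw [div_pow, div_pow, mul_pow, mul_pow, sq_abs]; ring
    _ ≤ _ := by
        rw [mul_comm 2, mul_assoc]
        gcongr
        simp only [s]
        nlinarith [sq_abs (θ - θ'), sq_abs (ψ - ψ'), two_mul_le_add_sq |θ - θ'| |ψ - ψ'|]

end Varrho

def freeRiding (βh : ℝ) (_θ ψ : ℝ) : ℝ := min (βh * ψ * (1 - ψ)) 1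

section FreeRiding

variable {lam r b ν d βh θh ψh : ℝ}

theorem epiVF_planar_eq (hlamφ : lam * (1 - θh - ψh) = r + b)
    (hνφ : ν * βh * (1 - ψh) * (1 - θh - ψh) = b) (α : ℝ) {θ ψ η : ℝ}
    (hq : βh * ψ * (1 - ψ) ≤ 1) :
    2 * α * (θ - θh) * (epiVF lam r b ν d (freeRiding βh) (θ, ψ, η)).1
        + 2 * (ψ - ψh) * (epiVF lam r b ν d (freeRiding βh) (θ, ψ, η)).2.1 =
      -(2 / (η * varrho lam r b ν d θ ψ)) *
        (α * lam * θ * (θ - θh) * (θ - θh + (ψ - ψh))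
          + ν * βh * ψ * (1 - ψ) * (ψ - ψh) * (θ - θh + (ψ - ψh))
          + ν * βh * (1 - θh - ψh) * ψ * (ψ - ψh) ^ 2) := by
  simp only [epiVF, freeRiding, min_eq_left hq, div_eq_mul_inv, one_mul]
  linear_combination (2 * α * (θ - θh) * θ * (η * varrho lam r b ν d θ ψ)⁻¹) * hlamφ
    + (2 * (ψ - ψh) * ψ * (η * varrho lam r b ν d θ ψ)⁻¹) * hνφ

theorem epiVF_freeRiding_eq_zero (hlamφ : lam * (1 - θh - ψh) = r + b)
    (hνφ : ν * βh * (1 - ψh) * (1 - θh - ψh) = b) (hq : βh * ψh * (1 - ψh) ≤ 1) :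
    epiVF lam r b ν d (freeRiding βh) (θh, ψh, (b - d) / varrho lam r b ν d θh ψh) = 0 := by
  simp only [epiVF, freeRiding, min_eq_left hq, Prod.mk_eq_zero]
  refine ⟨?_, ?_, sub_self _⟩
  · rw [mul_comm _ lam, hlamφ]; ring
  · rw [← hνφ]; ring

theorem epiVF_planar_le (hlamφ : lam * (1 - θh - ψh) = r + b)
    (hνφ : ν * βh * (1 - ψh) * (1 - θh - ψh) = b) {α A C ε E : ℝ} {θ ψ η : ℝ}
    (hq : βh * ψ * (1 - ψ) ≤ 1) (hE₀ : 0 < η * varrho lam r b ν d θ ψ)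
    (hE : η * varrho lam r b ν d θ ψ ≤ E) (hA : 3 * ε ≤ A) (hC : 3 * ε ≤ C)
    (h₁ : |α * lam * θ - A| ≤ ε) (h₂ : |ν * βh * ψ * (1 - ψ) - A| ≤ ε)
    (h₃ : |ν * βh * (1 - θh - ψh) * ψ - C| ≤ ε) :
    2 * α * (θ - θh) * (epiVF lam r b ν d (freeRiding βh) (θ, ψ, η)).1
        + 2 * (ψ - ψh) * (epiVF lam r b ν d (freeRiding βh) (θ, ψ, η)).2.1
      ≤ -(2 * ε / (3 * E)) * ((θ - θh) ^ 2 + (ψ - ψh) ^ 2) := by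
  rw [epiVF_planar_eq hlamφ hνφ α hq]
  set X := α * lam * θ * (θ - θh) * (θ - θh + (ψ - ψh))
    + ν * βh * ψ * (1 - ψ) * (ψ - ψh) * (θ - θh + (ψ - ψh))
    + ν * βh * (1 - θh - ψh) * ψ * (ψ - ψh) ^ 2
  have hX : ε * ((θ - θh) ^ 2 + (ψ - ψh) ^ 2) ≤ 3 * X :=
    le_three_mul_perturbed_form hA hC h₁ h₂ h₃
  have hε : 0 ≤ ε := (abs_nonneg _).trans h₁
  have hX₀ : 0 ≤ X := by nlinarith [sq_nonneg (θ - θh), sq_nonneg (ψ - ψh)]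
  rw [neg_mul, neg_mul, neg_le_neg_iff]
  calc 2 * ε / (3 * E) * ((θ - θh) ^ 2 + (ψ - ψh) ^ 2)
      = 2 / E * (ε * ((θ - θh) ^ 2 + (ψ - ψh) ^ 2) / 3) := by ring
    _ ≤ 2 / E * X := by have := hE₀.trans_le hE; gcongr; linarith
    _ ≤ 2 / (η * varrho lam r b ν d θ ψ) * X := by gcongr

theorem eventually_epiVF_planar_dissipation (hlam : 0 < lam) (hr : 0 ≤ r) (hb : 0 < b)
    (hν : 0 < ν) (hd : 0 ≤ d) (hβ : 0 < βh) (hθh : 0 < θh) (hψh : 0 < ψh)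
    (hφh : 0 < 1 - θh - ψh) (hlamφ : lam * (1 - θh - ψh) = r + b)
    (hνφ : ν * βh * (1 - ψh) * (1 - θh - ψh) = b) (hq : βh * ψh * (1 - ψh) < 1)
    {δ ηh : ℝ} (hδ : 0 < δ) (hηh : 0 < ηh) :
    ∃ α > 0, ∃ m > 0, ∀ᶠ x in 𝓝 (θh, ψh, ηh), x ∈ domD δ →
      2 * α * (x.1 - θh) * (epiVF lam r b ν d (freeRiding βh) x).1
          + 2 * (x.2.1 - ψh) * (epiVF lam r b ν d (freeRiding βh) x).2.1
        ≤ -m * ((x.1 - θh) ^ 2 + (x.2.1 - ψh) ^ 2) := by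
  set ϱh := varrho lam r b ν d θh ψh
  have hϱh : 0 < ϱh := hb.trans_le (le_varrho hlam.le hν.le hr hd hθh.le hφh.le)
  set A := ν * βh * ψh * (1 - ψh)
  set C := ν * βh * (1 - θh - ψh) * ψh
  set α := A / (lam * θh)
  set ε := min A C / 3
  have hA : 0 < A := mul_pos (by positivity) (by linarith)
  have hε : 0 < ε := by positivity
  have hαθ : α * lam * θh = A := by simp only [α]; field_simp
  refine ⟨α, by positivity, 2 * ε / (3 * (2 * ηh * ϱh)), by positivity, ?_⟩
  have hnear : ∀ {f : ℝ × ℝ × ℝ → ℝ} {c : ℝ}, Continuous f → f (θh, ψh, ηh) < c →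
      ∀ᶠ x in 𝓝 (θh, ψh, ηh), f x < c :=
    fun hf hc => hf.continuousAt.eventually_lt continuousAt_const hc
  have hq' := hnear (f := fun x => βh * x.2.1 * (1 - x.2.1)) (by fun_prop) hq
  have hE := hnear (f := fun x => x.2.2 * varrho lam r b ν d x.1 x.2.1) (c := 2 * ηh * ϱh)
    (by unfold varrho; fun_prop) (by simp only; nlinarith [mul_pos hηh hϱh])
  have h₁ := hnear (f := fun x => |α * lam * x.1 - A|) (by fun_prop)
    (by simpa only [hαθ, sub_self, abs_zero] using hε)
  have h₂ := hnear (f := fun x => |ν * βh * x.2.1 * (1 - x.2.1) - A|) (by fun_prop)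
    (by rw [show |A - A| = 0 by simp]; exact hε)
  have h₃ := hnear (f := fun x => |ν * βh * (1 - θh - ψh) * x.2.1 - C|) (by fun_prop)
    (by rw [show |C - C| = 0 by simp]; exact hε)
  filter_upwards [hq', hE, h₁, h₂, h₃]
    with ⟨θ, ψ, η⟩ hqx hEx h₁x h₂x h₃x ⟨hθ, _, hθψ, hηδ⟩
  dsimp only at hqx hEx h₁x h₂x h₃x hθ hθψ hηδ
  have hϱ : b ≤ varrho lam r b ν d θ ψ := le_varrho hlam.le hν.le hr hd hθ (by linarith)
  exact epiVF_planar_le hlamφ hνφ hqx.le (by nlinarith) hEx.le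
    (by simp only [ε]; linarith [min_le_left A C]) (by simp only [ε]; linarith [min_le_right A C])
    h₁x.le h₂x.le h₃x.le

theorem isLyapunovStableEquilibrium_epiVF_freeRiding {δ : ℝ} (hlam : 0 < lam) (hr : 0 ≤ r)
    (hb : 0 < b) (hν : 0 < ν) (hd : 0 ≤ d) (hδ : 0 < δ) (hβ : 0 < βh) (hθh : 0 < θh)
    (hψh : 0 < ψh) (hφh : 0 < 1 - θh - ψh) (hlamφ : lam * (1 - θh - ψh) = r + b)
    (hνφ : ν * βh * (1 - ψh) * (1 - θh - ψh) = b) (hq : βh * ψh * (1 - ψh) < 1)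
    (hη : δ < (b - d) / varrho lam r b ν d θh ψh) :
    IsLyapunovStableEquilibrium (epiVF lam r b ν d (freeRiding βh)) (domD δ)
      (θh, ψh, (b - d) / varrho lam r b ν d θh ψh) := by
  obtain ⟨α, hα, m, hm, hplanar⟩ := eventually_epiVF_planar_dissipation hlam hr hb hν hd hβ hθh
    hψh hφh hlamφ hνφ hq hδ (hδ.trans hη)
  refine isLyapunovStableEquilibrium_of_triangular
    (L := 2 * ((b - d) * (2 * lam + ν + r) / b ^ 2) ^ 2)
    ⟨hθh.le, hψh.le, by simp only; linarith, hη⟩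
    (epiVF_freeRiding_eq_zero hlamφ hνφ hq.le) hα hm (by positivity) hplanar
    (Eventually.of_forall fun ⟨θ, ψ, η⟩ ⟨hθ, _, hθψ, _⟩ => ?_)
  dsimp only at hθ hθψ ⊢
  rw [show (epiVF lam r b ν d (freeRiding βh) (θ, ψ, η)).2.2
      + (η - (b - d) / varrho lam r b ν d θh ψh)
      = (b - d) / varrho lam r b ν d θ ψ - (b - d) / varrho lam r b ν d θh ψh by
    simp only [epiVF]; ring]
  exact sq_div_varrho_sub_div_varrho_le (ψ := ψ) hlam.le hν.le hr hd hb (b - d) hθ (by linarith)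
    (by linarith) hθh.le hφh.le (by linarith)

end FreeRiding

theorem stmt_10_general (lam r b ν d δ βh ρ μ θh ψh ηh : ℝ)
    (hlam : 0 < lam) (hr : 0 < r) (hb : 0 < b) (hν : 0 < ν)
    (hd : 0 ≤ d) (hδ : 0 < δ) (hβ : 0 < βh)
    (hρdef : ρ = lam / (r + b)) (hμdef : μ = b / ν)
    (hρ : 1 < ρ) (hβgt : μ * ρ < βh) (hβlt : βh < ρ ^ 2 * μ)
    (hq1 : μ * ρ * (1 - μ * ρ / βh) < 1)
    (hθ : θh = μ * ρ / βh - 1 / ρ) (hψ : ψh = 1 - μ * ρ / βh)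
    (hηdef : ηh = (b - d) / varrho lam r b ν d θh ψh) (hη : δ < ηh) :
    IsLyapunovStableEquilibrium
      (epiVF lam r b ν d (fun _ ψ => min (βh * ψ * (1 - ψ)) 1)) (domD δ) (θh, ψh, ηh) := by
  subst hθ hψ hηdef
  have hρ₀ : 0 < ρ := by linarith
  have hμ₀ : 0 < μ := by rw [hμdef]; positivity
  have hφh : 1 - (μ * ρ / βh - 1 / ρ) - (1 - μ * ρ / βh) = 1 / ρ := by ring
  have hψh : 0 < 1 - μ * ρ / βh := by rw [sub_pos, div_lt_one hβ]; exact hβgt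
  have hθh : 0 < μ * ρ / βh - 1 / ρ := by
    rw [sub_pos, div_lt_div_iff₀ hρ₀ hβ]; nlinarith
  refine isLyapunovStableEquilibrium_epiVF_freeRiding hlam hr.le hb hν hd hδ hβ hθh hψh
    (by rw [hφh]; positivity) ?_ ?_ ?_ hη
  · rw [hφh, hρdef]; field_simp
  · rw [hφh, hμdef]; field_simp; ring
  · calc βh * (1 - μ * ρ / βh) * (1 - (1 - μ * ρ / βh)) = μ * ρ * (1 - μ * ρ / βh) := by
          field_simp; ring
      _ < 1 := hq1

/-- Free-riding response `q = min{β̂ψ(1−ψ), 1}`, endemic disease `ρ > 1`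
with `μρ < β̂ < ρ²μ` and `μρ(1 − μρ/β̂) < 1`: the interior co-existence point
`(μρ/β̂ − 1/ρ, 1 − μρ/β̂, η̂)` is a Lyapunov-stable equilibrium of `g`. -/
theorem stmt_10 (lam r b ν d δ βh ρ μ θh ψh ηh : ℝ)
    (hlam : 0 < lam) (hr : 0 < r) (hb : 0 < b) (hν : 0 < ν)
    (hd : 0 ≤ d) (hbd : d < b) (hδ : 0 < δ) (hβ : 0 < βh)
    (hρdef : ρ = lam / (r + b)) (hμdef : μ = b / ν)
    (hρ : 1 < ρ) (hβgt : μ * ρ < βh) (hβlt : βh < ρ ^ 2 * μ)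
    (hq1 : μ * ρ * (1 - μ * ρ / βh) < 1)
    (hθ : θh = μ * ρ / βh - 1 / ρ) (hψ : ψh = 1 - μ * ρ / βh)
    (hηdef : ηh = (b - d) / varrho lam r b ν d θh ψh) (hη : δ < ηh) :
    IsLyapunovStableEquilibrium
      (epiVF lam r b ν d (fun _ ψ => min (βh * ψ * (1 - ψ)) 1)) (domD δ) (θh, ψh, ηh) :=
  stmt_10_general lam r b ν d δ βh ρ μ θh ψh ηh hlam hr hb hν hd hδ hβ hρdef hμdef hρ hβgt hβlt hq1
    hθ hψ hηdef hη
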